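/- Consider two independent block-erasure channels with erasure probabilities ε_m ≤ ε_w acting blockwise (m blocks of length l) on the same input X^{ml} over finite alphabet X, with outputs Y^{ml} and Z^{ml} coupled so that Z is a degraded version of Y (each unerased block of Y is further erased independently with probability (ε_w−ε_m)/(1−ε_m)). Then for any input distribution, I(X^{ml}; Y^{ml} | Z^{ml}) ≤ m·l·(ε_w − ε_m)·log|X|. -/

import Mathlib

open Finset

/-- Joint distribution of the input `x` and the pair of outputs `(y, z)` of a degraded
pair of block-erasure channels: each block is erased in `y` with probability `εm`; an
unerased block of `y` is further erased in `z` independently with probability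
`(εw - εm)/(1 - εm)`, and otherwise `z` equals the block; erased blocks of `y` stay
erased in `z`. -/
noncomputable def bewJoint (X : Type) [Fintype X] [DecidableEq X] (m l : ℕ)
    (εm εw : ℝ) (p : (Fin m → Fin l → X) → ℝ) (x : Fin m → Fin l → X)
    (y z : Fin m → Option (Fin l → X)) : ℝ :=
  p x * ∏ i : Fin m,
    (match y i, z i with
      | none, none => εm
      | none, some _ => 0
      | some b, none =>
          if b = x i then (1 - εm) * ((εw - εm) / (1 - εm)) else 0
      | some b, some c =>
          if b = x i ∧ c = x i then (1 - εm) * (1 - (εw - εm) / (1 - εm)) else 0)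

/-- Conditional mutual information `I(X^{ml}; Y^{ml} | Z^{ml})` (in bits) for the
degraded coupling of the two block-erasure channels under input distribution `p`. -/
noncomputable def bewCMI (X : Type) [Fintype X] [DecidableEq X] (m l : ℕ)
    (εm εw : ℝ) (p : (Fin m → Fin l → X) → ℝ) : ℝ :=
  ∑ x : Fin m → Fin l → X, ∑ y : Fin m → Option (Fin l → X),
    ∑ z : Fin m → Option (Fin l → X),
      bewJoint X m l εm εw p x y z *
        Real.logb 2
          ((bewJoint X m l εm εw p x y z *
              ∑ x' : Fin m → Fin l → X, ∑ y' : Fin m → Option (Fin l → X),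
                bewJoint X m l εm εw p x' y' z) /
            ((∑ y' : Fin m → Option (Fin l → X), bewJoint X m l εm εw p x y' z) *
              (∑ x' : Fin m → Fin l → X, bewJoint X m l εm εw p x' y z)))

set_option linter.unusedSectionVars false
set_option linter.unusedVariables false

section BEW
variable {X : Type} [Fintype X] [DecidableEq X] {m l : ℕ}

noncomputable def cInd {l : ℕ} {X : Type} [DecidableEq X]
    (o : Option (Fin l → X)) (b : Fin l → X) : ℝ :=
  match o with
  | none => 1
  | some a => if a = b then 1 else 0

noncomputable def Pm (p : (Fin m → Fin l → X) → ℝ) (w : Fin m → Option (Fin l → X)) : ℝ :=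
  ∑ x, p x * ∏ i, cInd (w i) (x i)

noncomputable def chF (εm εw : ℝ) {l : ℕ} {X : Type} [DecidableEq X]
    (a : Fin l → X) (yo zo : Option (Fin l → X)) : ℝ :=
  match yo, zo with
  | none, none => εm
  | none, some _ => 0
  | some b, none => if b = a then (1 - εm) * ((εw - εm) / (1 - εm)) else 0
  | some b, some c => if b = a ∧ c = a then (1 - εm) * (1 - (εw - εm) / (1 - εm)) else 0

noncomputable def eF (εm εw : ℝ) {l : ℕ} {X : Type} [DecidableEq X]
    (yo zo : Option (Fin l → X)) : ℝ :=
  match yo, zo with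
  | none, none => εm
  | none, some _ => 0
  | some _, none => εw - εm
  | some b, some c => if b = c then 1 - εw else 0

noncomputable def cgF (ε : ℝ) {l : ℕ} {X : Type} (o : Option (Fin l → X)) : ℝ :=
  match o with | none => ε | some _ => 1 - ε

lemma bewJoint_eq (εm εw : ℝ) (p : (Fin m → Fin l → X) → ℝ) (x : Fin m → Fin l → X)
    (y z : Fin m → Option (Fin l → X)) :
    bewJoint X m l εm εw p x y z = p x * ∏ i, chF εm εw (x i) (y i) (z i) := by
  rw [bewJoint]
  congr 1
  apply Finset.prod_congr rfl
  intro i _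
  rcases y i with _ | b <;> rcases z i with _ | c <;> rfl

variable {εm εw : ℝ}

lemma coef1 (hm1 : εm < 1) : (1 - εm) * ((εw - εm) / (1 - εm)) = εw - εm := by
  have h1 : (1 - εm) ≠ 0 := by linarith
  field_simp

lemma coef2 (hm1 : εm < 1) : (1 - εm) * (1 - (εw - εm) / (1 - εm)) = 1 - εw := by
  rw [mul_sub, mul_one, coef1 hm1]; ring

lemma chF_eq (hm1 : εm < 1) (a : Fin l → X) (yo zo : Option (Fin l → X)) :
    chF εm εw a yo zo = eF εm εw yo zo * cInd yo a := by
  have e1 := coef1 (εw := εw) hm1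
  have e2 := coef2 (εw := εw) hm1
  cases yo with
  | none => cases zo <;> simp [chF, eF, cInd]
  | some b =>
    cases zo with
    | none =>
      simp only [chF, eF, cInd, e1]
      by_cases h : b = a <;> simp [h]
    | some c =>
      simp only [chF, eF, cInd, e2]
      by_cases hba : b = a
      · by_cases hca : c = a
        · subst hba; subst hca; simp
        · have hac : ¬ a = c := fun h => hca h.symm
          simp [hba, hca, hac]

      · by_cases hbc : b = c
        · subst hbc; simp [hba]
        · simp [hba, hbc]

lemma cInd_nonneg (o : Option (Fin l → X)) (b : Fin l → X) : 0 ≤ cInd o b := by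
  cases o <;> simp only [cInd] <;> try split
  all_goals norm_num

lemma eF_nonneg (h0 : 0 ≤ εm) (hmw : εm ≤ εw) (hw1 : εw ≤ 1)
    (yo zo : Option (Fin l → X)) : 0 ≤ eF εm εw yo zo := by
  cases yo <;> cases zo <;> simp only [eF] <;> try split
  all_goals linarith

lemma chF_nonneg (h0 : 0 ≤ εm) (hmw : εm ≤ εw) (hw1 : εw ≤ 1) (hm1 : εm < 1)
    (a : Fin l → X) (yo zo : Option (Fin l → X)) : 0 ≤ chF εm εw a yo zo := by
  rw [chF_eq hm1]
  exact mul_nonneg (eF_nonneg h0 hmw hw1 _ _) (cInd_nonneg _ _)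

lemma cgF_nonneg {ε : ℝ} (h0 : 0 ≤ ε) (h1 : ε ≤ 1) (o : Option (Fin l → X)) :
    0 ≤ cgF ε o := by
  cases o <;> simp only [cgF] <;> linarith

lemma sum_chF_y (hm1 : εm < 1) (a : Fin l → X) (zo : Option (Fin l → X)) :
    ∑ yo : Option (Fin l → X), chF εm εw a yo zo = cgF εw zo * cInd zo a := by
  have e1 := coef1 (εw := εw) hm1
  have e2 := coef2 (εw := εw) hm1
  rw [Fintype.sum_option]
  cases zo with
  | none =>
    simp only [chF, cgF, cInd, e1, mul_one]
    rw [Finset.sum_ite_eq' univ a (fun _ => εw - εm)]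
    simp
  | some c =>
    simp only [chF, cgF, cInd, e2, zero_add]
    by_cases hc : c = a
    · subst hc
      rw [Finset.sum_congr rfl (fun b _ => by simp : ∀ b ∈ univ, (if b = c ∧ c = c then 1 - εw else 0) = if b = c then 1 - εw else 0)]
      rw [Finset.sum_ite_eq' univ c (fun _ => 1 - εw)]
      simp
    · rw [Finset.sum_eq_zero (fun b _ => by simp [hc])]
      simp [hc]

lemma sum_chF_z (hm1 : εm < 1) (a : Fin l → X) (yo : Option (Fin l → X)) :
    ∑ zo : Option (Fin l → X), chF εm εw a yo zo = cgF εm yo * cInd yo a := by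
  have e1 := coef1 (εw := εw) hm1
  have e2 := coef2 (εw := εw) hm1
  rw [Fintype.sum_option]
  cases yo with
  | none => simp [chF, cgF, cInd]
  | some b =>
    simp only [chF, cgF, cInd, e1, e2]
    by_cases hb : b = a
    · subst hb
      simp only [if_pos rfl, true_and]
      rw [Finset.sum_ite_eq' univ b (fun _ => 1 - εw)]
      simp
    · rw [Finset.sum_eq_zero (fun c _ => by simp [hb])]
      simp [hb]

lemma sum_cg_cInd (ε : ℝ) (b : Fin l → X) :
    ∑ o : Option (Fin l → X), cgF (l := l) (X := X) ε o * cInd o b = 1 := by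
  rw [Fintype.sum_option]
  simp only [cgF, cInd, mul_one]
  rw [Finset.sum_congr rfl (fun a _ => by by_cases h : a = b <;> simp [h] :
    ∀ a ∈ univ, (1 - ε) * (if a = b then (1:ℝ) else 0) = if a = b then 1 - ε else 0)]
  rw [Finset.sum_ite_eq' univ b (fun _ => 1 - ε)]
  simp


lemma qXZ_eq (hm1 : εm < 1) (p : (Fin m → Fin l → X) → ℝ) (x : Fin m → Fin l → X)
    (z : Fin m → Option (Fin l → X)) :
    ∑ y : Fin m → Option (Fin l → X), bewJoint X m l εm εw p x y z
      = p x * ∏ i, (cgF εw (z i) * cInd (z i) (x i)) := by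
  simp only [bewJoint_eq]
  rw [← Finset.mul_sum]
  congr 1
  calc ∑ y : Fin m → Option (Fin l → X), ∏ i, chF εm εw (x i) (y i) (z i)
      = ∏ i, ∑ v : Option (Fin l → X), chF εm εw (x i) v (z i) := by
        rw [Finset.prod_univ_sum, Fintype.piFinset_univ]
    _ = ∏ i, (cgF εw (z i) * cInd (z i) (x i)) :=
        Finset.prod_congr rfl (fun i _ => sum_chF_y hm1 _ _)

lemma qYZ_eq (hm1 : εm < 1) (p : (Fin m → Fin l → X) → ℝ)
    (y z : Fin m → Option (Fin l → X)) :
    ∑ x : Fin m → Fin l → X, bewJoint X m l εm εw p x y z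
      = (∏ i, eF εm εw (y i) (z i)) * Pm p y := by
  simp only [bewJoint_eq, Pm]
  rw [Finset.mul_sum]
  apply Finset.sum_congr rfl
  intro x _
  rw [Finset.prod_congr rfl (fun i _ => chF_eq hm1 (x i) (y i) (z i)),
    Finset.prod_mul_distrib]
  ring

lemma qZ_eq (hm1 : εm < 1) (p : (Fin m → Fin l → X) → ℝ)
    (z : Fin m → Option (Fin l → X)) :
    ∑ x : Fin m → Fin l → X, ∑ y : Fin m → Option (Fin l → X),
      bewJoint X m l εm εw p x y z = (∏ i, cgF εw (z i)) * Pm p z := by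
  rw [Finset.sum_congr rfl (fun x _ => qXZ_eq hm1 p x z)]
  simp only [Pm]
  rw [Finset.mul_sum]
  apply Finset.sum_congr rfl
  intro x _
  rw [Finset.prod_mul_distrib]
  ring

lemma qY_eq (hm1 : εm < 1) (p : (Fin m → Fin l → X) → ℝ)
    (y : Fin m → Option (Fin l → X)) :
    ∑ x : Fin m → Fin l → X, ∑ z : Fin m → Option (Fin l → X),
      bewJoint X m l εm εw p x y z = (∏ i, cgF εm (y i)) * Pm p y := by
  have inner : ∀ x : Fin m → Fin l → X,
      ∑ z : Fin m → Option (Fin l → X), bewJoint X m l εm εw p x y z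
        = p x * ∏ i, (cgF εm (y i) * cInd (y i) (x i)) := by
    intro x
    simp only [bewJoint_eq]
    rw [← Finset.mul_sum]
    congr 1
    calc ∑ z : Fin m → Option (Fin l → X), ∏ i, chF εm εw (x i) (y i) (z i)
        = ∏ i, ∑ v : Option (Fin l → X), chF εm εw (x i) (y i) v := by
          rw [Finset.prod_univ_sum, Fintype.piFinset_univ]
      _ = ∏ i, (cgF εm (y i) * cInd (y i) (x i)) :=
          Finset.prod_congr rfl (fun i _ => sum_chF_z hm1 _ _)
  rw [Finset.sum_congr rfl (fun x _ => inner x)]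
  simp only [Pm]
  rw [Finset.mul_sum]
  apply Finset.sum_congr rfl
  intro x _
  rw [Finset.prod_mul_distrib]
  ring

lemma bewJoint_nonneg (h0 : 0 ≤ εm) (hmw : εm ≤ εw) (hw1 : εw ≤ 1) (hm1 : εm < 1)
    (p : (Fin m → Fin l → X) → ℝ) (hp : ∀ x, 0 ≤ p x) (x : Fin m → Fin l → X)
    (y z : Fin m → Option (Fin l → X)) : 0 ≤ bewJoint X m l εm εw p x y z := by
  rw [bewJoint_eq]
  exact mul_nonneg (hp x) (Finset.prod_nonneg fun i _ => chF_nonneg h0 hmw hw1 hm1 _ _ _)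

lemma Pm_nonneg (p : (Fin m → Fin l → X) → ℝ) (hp : ∀ x, 0 ≤ p x)
    (w : Fin m → Option (Fin l → X)) : 0 ≤ Pm p w :=
  Finset.sum_nonneg fun x _ => mul_nonneg (hp x)
    (Finset.prod_nonneg fun i _ => cInd_nonneg _ _)

lemma Pm_ge (p : (Fin m → Fin l → X) → ℝ) (hp : ∀ x, 0 ≤ p x)
    (w : Fin m → Option (Fin l → X)) (x : Fin m → Fin l → X)
    (hx : ∀ i, cInd (w i) (x i) = 1) : p x ≤ Pm p w := by
  have : p x = p x * ∏ i, cInd (w i) (x i) := by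
    rw [Finset.prod_congr rfl (fun i _ => hx i)]; simp
  rw [this]
  exact Finset.single_le_sum
    (fun x' _ => mul_nonneg (hp x') (Finset.prod_nonneg fun i _ => cInd_nonneg (w i) (x' i)))
    (Finset.mem_univ x)


lemma term_eq (h0 : 0 ≤ εm) (hmw : εm ≤ εw) (hw1 : εw ≤ 1) (hm1 : εm < 1)
    (p : (Fin m → Fin l → X) → ℝ) (hp : ∀ x, 0 ≤ p x)
    (x : Fin m → Fin l → X) (y z : Fin m → Option (Fin l → X)) :
    bewJoint X m l εm εw p x y z *
        Real.logb 2
          ((bewJoint X m l εm εw p x y z *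
              ∑ x' : Fin m → Fin l → X, ∑ y' : Fin m → Option (Fin l → X),
                bewJoint X m l εm εw p x' y' z) /
            ((∑ y' : Fin m → Option (Fin l → X), bewJoint X m l εm εw p x y' z) *
              (∑ x' : Fin m → Fin l → X, bewJoint X m l εm εw p x' y z))) =
      bewJoint X m l εm εw p x y z * (Real.logb 2 (Pm p z) - Real.logb 2 (Pm p y)) := by
  by_cases hq : bewJoint X m l εm εw p x y z = 0
  · rw [hq, zero_mul, zero_mul]
  have hJ := bewJoint_eq εm εw p x y z
  have hpx : p x ≠ 0 := fun h => hq (by rw [hJ, h, zero_mul])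
  have hpxpos : 0 < p x := lt_of_le_of_ne (hp x) (Ne.symm hpx)
  have hprodne : (∏ i, chF εm εw (x i) (y i) (z i)) ≠ 0 :=
    fun h => hq (by rw [hJ, h, mul_zero])
  have hch : ∀ i, chF εm εw (x i) (y i) (z i) ≠ 0 := by
    intro i hcontra
    exact hprodne (Finset.prod_eq_zero (Finset.mem_univ i) hcontra)
  have hchpos : ∀ i, 0 < chF εm εw (x i) (y i) (z i) :=
    fun i => lt_of_le_of_ne (chF_nonneg h0 hmw hw1 hm1 _ _ _) (Ne.symm (hch i))
  have hcy : ∀ i, cInd (y i) (x i) = 1 := by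
    intro i
    have hi := hch i
    cases hy : y i with
    | none => simp [cInd]
    | some b =>
      rw [hy] at hi
      by_cases hb : b = x i
      · simp [cInd, hb]
      · exfalso
        apply hi
        cases hz : z i with
        | none => simp [chF, hb]
        | some c => simp [chF, hb]
  have hcz : ∀ i, cInd (z i) (x i) = 1 := by
    intro i
    have hi := hch i
    cases hz : z i with
    | none => simp [cInd]
    | some c =>
      rw [hz] at hi
      by_cases hc : c = x i
      · simp [cInd, hc]
      · exfalso
        apply hi
        cases hy : y i with
        | none => simp [chF]
        | some b => simp [chF, hc]
  have hcgz : ∀ i, 0 < cgF εw (z i) := by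
    intro i
    have hi := hchpos i
    rw [chF_eq hm1, hcy i, mul_one] at hi
    cases hz : z i with
    | none =>
      simp only [cgF]
      cases hy : y i with
      | none => rw [hy, hz] at hi; simp only [eF] at hi; linarith
      | some b => rw [hy, hz] at hi; simp only [eF] at hi; linarith
    | some c =>
      simp only [cgF]
      cases hy : y i with
      | none => rw [hy, hz] at hi; simp only [eF] at hi; linarith
      | some b =>
        rw [hy, hz] at hi; simp only [eF] at hi
        by_cases hbc : b = c
        · rw [if_pos hbc] at hi; linarith
        · rw [if_neg hbc] at hi; linarith
  have heF : ∀ i, chF εm εw (x i) (y i) (z i) = eF εm εw (y i) (z i) := fun i => by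
    rw [chF_eq hm1, hcy i, mul_one]
  have hEpos : 0 < ∏ i, eF εm εw (y i) (z i) := by
    rw [← Finset.prod_congr rfl (fun i _ => heF i)]
    exact Finset.prod_pos (fun i _ => hchpos i)
  have hApos : 0 < ∏ i, cgF εw (z i) := Finset.prod_pos fun i _ => hcgz i
  have hPy : 0 < Pm p y := lt_of_lt_of_le hpxpos (Pm_ge p hp y x hcy)
  have hPz : 0 < Pm p z := lt_of_lt_of_le hpxpos (Pm_ge p hp z x hcz)
  rw [qZ_eq hm1, qXZ_eq hm1, qYZ_eq hm1]
  have hprodeq : (∏ i, (cgF εw (z i) * cInd (z i) (x i))) = ∏ i, cgF εw (z i) :=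
    Finset.prod_congr rfl (fun i _ => by rw [hcz i, mul_one])
  rw [hprodeq]
  have hq' : bewJoint X m l εm εw p x y z
      = p x * ∏ i, eF εm εw (y i) (z i) := by
    rw [hJ]
    exact congrArg _ (Finset.prod_congr rfl fun i _ => heF i)
  rw [hq']
  congr 1
  have hratio : p x * (∏ i, eF εm εw (y i) (z i)) *
        ((∏ i, cgF εw (z i)) * Pm p z) /
      (p x * (∏ i, cgF εw (z i)) * ((∏ i, eF εm εw (y i) (z i)) * Pm p y))
      = Pm p z / Pm p y := by
    field_simp
  rw [hratio, Real.logb_div (ne_of_gt hPz) (ne_of_gt hPy)]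


noncomputable def Psi (p : (Fin m → Fin l → X) → ℝ) (e : Fin m → ℝ) : ℝ :=
  ∑ w : Fin m → Option (Fin l → X),
    (∏ i, cgF (e i) (w i)) * (Pm p w * Real.logb 2 (Pm p w))

lemma cmi_eq (h0 : 0 ≤ εm) (hmw : εm ≤ εw) (hw1 : εw ≤ 1) (hm1 : εm < 1)
    (p : (Fin m → Fin l → X) → ℝ) (hp : ∀ x, 0 ≤ p x) :
    (∑ x : Fin m → Fin l → X, ∑ y : Fin m → Option (Fin l → X),
      ∑ z : Fin m → Option (Fin l → X),
        bewJoint X m l εm εw p x y z *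
          Real.logb 2
            ((bewJoint X m l εm εw p x y z *
                ∑ x' : Fin m → Fin l → X, ∑ y' : Fin m → Option (Fin l → X),
                  bewJoint X m l εm εw p x' y' z) /
              ((∑ y' : Fin m → Option (Fin l → X), bewJoint X m l εm εw p x y' z) *
                (∑ x' : Fin m → Fin l → X, bewJoint X m l εm εw p x' y z))))
      = Psi p (fun _ => εw) - Psi p (fun _ => εm) := by
  have h1 : (∑ x : Fin m → Fin l → X, ∑ y : Fin m → Option (Fin l → X),
      ∑ z : Fin m → Option (Fin l → X),
        bewJoint X m l εm εw p x y z *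
          Real.logb 2
            ((bewJoint X m l εm εw p x y z *
                ∑ x' : Fin m → Fin l → X, ∑ y' : Fin m → Option (Fin l → X),
                  bewJoint X m l εm εw p x' y' z) /
              ((∑ y' : Fin m → Option (Fin l → X), bewJoint X m l εm εw p x y' z) *
                (∑ x' : Fin m → Fin l → X, bewJoint X m l εm εw p x' y z))))
      = ∑ x : Fin m → Fin l → X, ∑ y : Fin m → Option (Fin l → X),
          ∑ z : Fin m → Option (Fin l → X),
            (bewJoint X m l εm εw p x y z * Real.logb 2 (Pm p z)
              - bewJoint X m l εm εw p x y z * Real.logb 2 (Pm p y)) := by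
    refine Finset.sum_congr rfl fun x _ => Finset.sum_congr rfl fun y _ =>
      Finset.sum_congr rfl fun z _ => ?_
    rw [term_eq h0 hmw hw1 hm1 p hp x y z, mul_sub]
  have hA : ∑ x : Fin m → Fin l → X, ∑ y : Fin m → Option (Fin l → X),
      ∑ z : Fin m → Option (Fin l → X),
        bewJoint X m l εm εw p x y z * Real.logb 2 (Pm p z) = Psi p (fun _ => εw) := by
    calc ∑ x : Fin m → Fin l → X, ∑ y : Fin m → Option (Fin l → X),
          ∑ z : Fin m → Option (Fin l → X),
            bewJoint X m l εm εw p x y z * Real.logb 2 (Pm p z)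
        = ∑ z : Fin m → Option (Fin l → X), ∑ x : Fin m → Fin l → X,
            ∑ y : Fin m → Option (Fin l → X),
              bewJoint X m l εm εw p x y z * Real.logb 2 (Pm p z) := by
          rw [Finset.sum_congr rfl fun x _ => Finset.sum_comm]
          exact Finset.sum_comm
      _ = ∑ z : Fin m → Option (Fin l → X),
            (∑ x : Fin m → Fin l → X, ∑ y : Fin m → Option (Fin l → X),
              bewJoint X m l εm εw p x y z) * Real.logb 2 (Pm p z) := by
          refine Finset.sum_congr rfl fun z _ => ?_
          rw [Finset.sum_mul]
          exact Finset.sum_congr rfl fun x _ => (Finset.sum_mul _ _ _).symm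
      _ = Psi p (fun _ => εw) := by
          rw [Psi]
          refine Finset.sum_congr rfl fun z _ => ?_
          rw [qZ_eq hm1 p z, mul_assoc]
  have hB : ∑ x : Fin m → Fin l → X, ∑ y : Fin m → Option (Fin l → X),
      ∑ z : Fin m → Option (Fin l → X),
        bewJoint X m l εm εw p x y z * Real.logb 2 (Pm p y) = Psi p (fun _ => εm) := by
    calc ∑ x : Fin m → Fin l → X, ∑ y : Fin m → Option (Fin l → X),
          ∑ z : Fin m → Option (Fin l → X),
            bewJoint X m l εm εw p x y z * Real.logb 2 (Pm p y)
        = ∑ y : Fin m → Option (Fin l → X), ∑ x : Fin m → Fin l → X,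
            ∑ z : Fin m → Option (Fin l → X),
              bewJoint X m l εm εw p x y z * Real.logb 2 (Pm p y) :=
          Finset.sum_comm
      _ = ∑ y : Fin m → Option (Fin l → X),
            (∑ x : Fin m → Fin l → X, ∑ z : Fin m → Option (Fin l → X),
              bewJoint X m l εm εw p x y z) * Real.logb 2 (Pm p y) := by
          refine Finset.sum_congr rfl fun y _ => ?_
          rw [Finset.sum_mul]
          exact Finset.sum_congr rfl fun x _ => (Finset.sum_mul _ _ _).symm
      _ = Psi p (fun _ => εm) := by
          rw [Psi]
          refine Finset.sum_congr rfl fun y _ => ?_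
          rw [qY_eq hm1 p y, mul_assoc]
  rw [h1]
  simp only [Finset.sum_sub_distrib]
  rw [hA, hB]

end BEW

lemma KEL {J : Type} [Fintype J] [Nonempty J] (r : J → ℝ) (hr : ∀ j, 0 ≤ r j) :
    (∑ j, r j) * Real.logb 2 (∑ j, r j) - ∑ j, r j * Real.logb 2 (r j)
      ≤ (∑ j, r j) * Real.logb 2 (Fintype.card J) := by
  have hn : (0:ℝ) < Fintype.card J := by
    have := Fintype.card_pos (α := J)
    positivity
  have hnne : ((Fintype.card J : ℝ))⁻¹ ≥ 0 := by positivity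
  have key : (∑ j, r j) * Real.log (∑ j, r j) - ∑ j, r j * Real.log (r j)
      ≤ (∑ j, r j) * Real.log (Fintype.card J) := by
    have h1' : ∑ _j : J, ((Fintype.card J : ℝ))⁻¹ = 1 := by
      rw [Finset.sum_const, nsmul_eq_mul, Finset.card_univ]
      field_simp
    have jensen := Real.concaveOn_negMulLog.le_map_sum (t := (univ : Finset J))
      (w := fun _ : J => ((Fintype.card J : ℝ))⁻¹) (p := r)
      (fun _ _ => hnne) h1' (fun j _ => Set.mem_Ici.mpr (hr j))
    simp only [smul_eq_mul] at jensen
    rw [← Finset.mul_sum, ← Finset.mul_sum] at jensen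
    have hmul : Real.negMulLog ((Fintype.card J : ℝ)⁻¹ * ∑ j, r j)
        = (∑ j, r j) * Real.negMulLog (Fintype.card J : ℝ)⁻¹
          + (Fintype.card J : ℝ)⁻¹ * Real.negMulLog (∑ j, r j) :=
      Real.negMulLog_mul _ _
    rw [hmul] at jensen
    have hinv : Real.negMulLog ((Fintype.card J : ℝ))⁻¹
        = (Fintype.card J : ℝ)⁻¹ * Real.log (Fintype.card J) := by
      rw [Real.negMulLog, Real.log_inv]; ring
    rw [hinv] at jensen
    have hsum : ∑ j, Real.negMulLog (r j) = - ∑ j, r j * Real.log (r j) := by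
      rw [← Finset.sum_neg_distrib]
      exact Finset.sum_congr rfl fun j _ => by rw [Real.negMulLog]; ring
    rw [hsum] at jensen
    have hcl : (Fintype.card J : ℝ)⁻¹ * (- ∑ j, r j * Real.log (r j))
        ≤ (Fintype.card J : ℝ)⁻¹ *
          ((∑ j, r j) * Real.log (Fintype.card J) - (∑ j, r j) * Real.log (∑ j, r j)) := by
      calc (Fintype.card J : ℝ)⁻¹ * (- ∑ j, r j * Real.log (r j))
          = (Fintype.card J : ℝ)⁻¹ * (- ∑ j, r j * Real.log (r j)) := rfl
        _ ≤ _ := by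
            rw [Real.negMulLog] at jensen
            nlinarith [jensen]
    have := (mul_le_mul_iff_right₀ (by positivity : (0:ℝ) < (Fintype.card J : ℝ)⁻¹)).mp hcl
    linarith
  have hlog2 : (0:ℝ) < Real.log 2 := Real.log_pos (by norm_num)
  simp only [Real.logb]
  have h1 : ∑ j, r j * (Real.log (r j) / Real.log 2)
      = (∑ j, r j * Real.log (r j)) / Real.log 2 := by
    rw [Finset.sum_div]
    exact Finset.sum_congr rfl fun j _ => (mul_div_assoc _ _ _).symm
  rw [h1, ← mul_div_assoc, ← mul_div_assoc, div_sub_div_same]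
  exact div_le_div_of_nonneg_right key hlog2.le


section SPLIT
variable {m : ℕ}

def extAt {β : Type} (i : Fin m) (g : {j : Fin m // j ≠ i} → β) (v : β) : Fin m → β :=
  fun j => if h : j = i then v else g ⟨j, h⟩

lemma extAt_self {β : Type} (i : Fin m) (g : {j : Fin m // j ≠ i} → β) (v : β) :
    extAt i g v i = v := dif_pos rfl

lemma extAt_ne {β : Type} (i : Fin m) (g : {j : Fin m // j ≠ i} → β) (v : β)
    {j : Fin m} (h : j ≠ i) : extAt i g v j = g ⟨j, h⟩ := dif_neg h

lemma sum_splitAt {β : Type} [Fintype β] (i : Fin m) (F : (Fin m → β) → ℝ) :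
    ∑ w : Fin m → β, F w
      = ∑ v : β, ∑ g : {j : Fin m // j ≠ i} → β, F (extAt i g v) := by
  rw [← Equiv.sum_comp (Equiv.funSplitAt i β).symm F, Fintype.sum_prod_type]
  refine Finset.sum_congr rfl fun v _ => Finset.sum_congr rfl fun g _ => ?_
  congr 1
  funext j
  show (Equiv.funSplitAt i β).symm (v, g) j = extAt i g v j
  simp only [Equiv.funSplitAt, Equiv.piSplitAt, Equiv.coe_fn_symm_mk, extAt]
  split_ifs with h
  · subst h; rfl
  · rfl

lemma prod_splitAt (i : Fin m) (H : Fin m → ℝ) :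
    ∏ j, H j = H i * ∏ j : {j : Fin m // j ≠ i}, H j := by
  rw [← Finset.mul_prod_erase univ H (Finset.mem_univ i)]
  congr 1
  exact Finset.prod_subtype (Finset.univ.erase i)
    (fun x => by simp [Finset.mem_erase]) (fun j => H j)

end SPLIT

section STEP
variable {X : Type} [Fintype X] [DecidableEq X] {m l : ℕ} {εm εw : ℝ}

lemma Pm_extAt (p : (Fin m → Fin l → X) → ℝ) (i : Fin m)
    (g : {j : Fin m // j ≠ i} → Option (Fin l → X)) (v : Option (Fin l → X)) :
    Pm p (extAt i g v)
      = ∑ x, p x * (cInd v (x i) *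
          ∏ j : {j : Fin m // j ≠ i}, cInd (g j) (x j.1)) := by
  rw [Pm]
  refine Finset.sum_congr rfl fun x _ => ?_
  congr 1
  rw [prod_splitAt i (fun j => cInd (extAt i g v j) (x j))]
  congr 1
  · rw [extAt_self]
  · exact Finset.prod_congr rfl fun j _ => by rw [extAt_ne i g v j.2]

lemma sum_Pm_extAt (p : (Fin m → Fin l → X) → ℝ) (i : Fin m)
    (g : {j : Fin m // j ≠ i} → Option (Fin l → X)) :
    ∑ b : Fin l → X, Pm p (extAt i g (some b)) = Pm p (extAt i g none) := by
  simp only [Pm_extAt]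
  rw [Finset.sum_comm]
  refine Finset.sum_congr rfl fun x _ => ?_
  have : ∀ b : Fin l → X, p x * (cInd (some b) (x i) *
      ∏ j : {j : Fin m // j ≠ i}, cInd (g j) (x j.1))
      = (if b = x i then (1:ℝ) else 0) *
        (p x * ∏ j : {j : Fin m // j ≠ i}, cInd (g j) (x j.1)) := by
    intro b
    simp only [cInd]
    ring
  rw [Finset.sum_congr rfl fun b _ => this b, ← Finset.sum_mul,
    Finset.sum_ite_eq' univ (x i) (fun _ => (1:ℝ))]
  simp [cInd]

lemma mass_extAt (p : (Fin m → Fin l → X) → ℝ) (hp1 : ∑ x, p x = 1)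
    (i : Fin m) (e : Fin m → ℝ) :
    ∑ g : {j : Fin m // j ≠ i} → Option (Fin l → X),
      (∏ j : {j : Fin m // j ≠ i}, cgF (e j.1) (g j)) * Pm p (extAt i g none) = 1 := by
  have h1 : ∀ g : {j : Fin m // j ≠ i} → Option (Fin l → X),
      (∏ j : {j : Fin m // j ≠ i}, cgF (e j.1) (g j)) * Pm p (extAt i g none)
        = ∑ x, p x * ∏ j : {j : Fin m // j ≠ i},
            (cgF (e j.1) (g j) * cInd (g j) (x j.1)) := by
    intro g
    rw [Pm_extAt, Finset.mul_sum]
    refine Finset.sum_congr rfl fun x _ => ?_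
    rw [Finset.prod_mul_distrib]
    simp only [cInd]
    ring
  rw [Finset.sum_congr rfl fun g _ => h1 g, Finset.sum_comm]
  rw [← hp1]
  refine Finset.sum_congr rfl fun x _ => ?_
  rw [← Finset.mul_sum]
  have h2 : ∑ g : {j : Fin m // j ≠ i} → Option (Fin l → X),
      ∏ j : {j : Fin m // j ≠ i}, (cgF (e j.1) (g j) * cInd (g j) (x j.1))
      = ∏ j : {j : Fin m // j ≠ i}, ∑ v : Option (Fin l → X),
          (cgF (e j.1) v * cInd v (x j.1)) := by
    rw [Finset.prod_univ_sum, Fintype.piFinset_univ]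
  rw [h2, Finset.prod_congr rfl fun j _ => sum_cg_cInd (e j.1) (x j.1)]
  simp

lemma step_bound [Nonempty X] (h0 : 0 ≤ εm) (hmw : εm ≤ εw) (hw1 : εw ≤ 1)
    (p : (Fin m → Fin l → X) → ℝ) (hp : ∀ x, 0 ≤ p x) (hp1 : ∑ x, p x = 1)
    (i : Fin m) (e : Fin m → ℝ) (he0 : ∀ j, 0 ≤ e j) (he1 : ∀ j, e j ≤ 1) :
    Psi p (Function.update e i εw) - Psi p (Function.update e i εm)
      ≤ (εw - εm) * Real.logb 2 (Fintype.card (Fin l → X)) := by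
  have hPsi : ∀ t : ℝ, Psi p (Function.update e i t)
      = ∑ v : Option (Fin l → X), ∑ g : {j : Fin m // j ≠ i} → Option (Fin l → X),
          (cgF t v * ∏ j : {j : Fin m // j ≠ i}, cgF (e j.1) (g j)) *
            (Pm p (extAt i g v) * Real.logb 2 (Pm p (extAt i g v))) := by
    intro t
    rw [Psi, sum_splitAt i]
    refine Finset.sum_congr rfl fun v _ => Finset.sum_congr rfl fun g _ => ?_
    congr 1
    rw [prod_splitAt i (fun j => cgF (Function.update e i t j) (extAt i g v j))]
    congr 1
    · rw [Function.update_self, extAt_self]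
    · refine Finset.prod_congr rfl fun j _ => ?_
      rw [Function.update_of_ne j.2, extAt_ne i g v j.2]
  have hdiff : Psi p (Function.update e i εw) - Psi p (Function.update e i εm)
      = (εw - εm) * ∑ g : {j : Fin m // j ≠ i} → Option (Fin l → X),
          (∏ j : {j : Fin m // j ≠ i}, cgF (e j.1) (g j)) *
            ((Pm p (extAt i g none) * Real.logb 2 (Pm p (extAt i g none)))
              - ∑ b : Fin l → X, Pm p (extAt i g (some b)) *
                  Real.logb 2 (Pm p (extAt i g (some b)))) := by
    have hswap : ∀ t : ℝ, ∑ b : Fin l → X,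
        ∑ g : {j : Fin m // j ≠ i} → Option (Fin l → X),
          (cgF t (some b) * ∏ j : {j : Fin m // j ≠ i}, cgF (e j.1) (g j)) *
            (Pm p (extAt i g (some b)) * Real.logb 2 (Pm p (extAt i g (some b))))
        = ∑ g : {j : Fin m // j ≠ i} → Option (Fin l → X),
            ∑ b : Fin l → X,
              (cgF t (some b) * ∏ j : {j : Fin m // j ≠ i}, cgF (e j.1) (g j)) *
                (Pm p (extAt i g (some b)) * Real.logb 2 (Pm p (extAt i g (some b)))) :=
      fun t => Finset.sum_comm
    rw [hPsi εw, hPsi εm, Fintype.sum_option, Fintype.sum_option, hswap εw, hswap εm,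
      Finset.mul_sum]
    rw [← Finset.sum_add_distrib, ← Finset.sum_add_distrib, ← Finset.sum_sub_distrib]
    refine Finset.sum_congr rfl fun g _ => ?_
    simp only [show ∀ b : Fin l → X, cgF εw (some b) = 1 - εw from fun _ => rfl,
      show ∀ b : Fin l → X, cgF εm (some b) = 1 - εm from fun _ => rfl,
      show cgF εw (none : Option (Fin l → X)) = εw from rfl,
      show cgF εm (none : Option (Fin l → X)) = εm from rfl]
    have h1 : ∀ c : ℝ, ∑ b : Fin l → X,
        (c * ∏ j : {j : Fin m // j ≠ i}, cgF (e j.1) (g j)) *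
          (Pm p (extAt i g (some b)) * Real.logb 2 (Pm p (extAt i g (some b))))
        = (c * ∏ j : {j : Fin m // j ≠ i}, cgF (e j.1) (g j)) *
          ∑ b : Fin l → X, Pm p (extAt i g (some b)) *
            Real.logb 2 (Pm p (extAt i g (some b))) :=
      fun c => (Finset.mul_sum _ _ _).symm
    rw [h1 (1 - εw), h1 (1 - εm)]
    ring
  rw [hdiff]
  have hR0 : ∀ g : {j : Fin m // j ≠ i} → Option (Fin l → X),
      0 ≤ ∏ j : {j : Fin m // j ≠ i}, cgF (e j.1) (g j) :=
    fun g => Finset.prod_nonneg fun j _ => cgF_nonneg (he0 j.1) (he1 j.1) _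
  have hkey : ∀ g : {j : Fin m // j ≠ i} → Option (Fin l → X),
      (Pm p (extAt i g none) * Real.logb 2 (Pm p (extAt i g none))
          - ∑ b : Fin l → X, Pm p (extAt i g (some b)) *
              Real.logb 2 (Pm p (extAt i g (some b))))
        ≤ Pm p (extAt i g none) * Real.logb 2 (Fintype.card (Fin l → X)) := by
    intro g
    have := KEL (fun b : Fin l → X => Pm p (extAt i g (some b)))
      (fun b => Pm_nonneg p hp _)
    rw [sum_Pm_extAt p i g] at this
    exact this
  calc (εw - εm) * ∑ g : {j : Fin m // j ≠ i} → Option (Fin l → X),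
        (∏ j : {j : Fin m // j ≠ i}, cgF (e j.1) (g j)) *
          ((Pm p (extAt i g none) * Real.logb 2 (Pm p (extAt i g none)))
            - ∑ b : Fin l → X, Pm p (extAt i g (some b)) *
                Real.logb 2 (Pm p (extAt i g (some b))))
      ≤ (εw - εm) * ∑ g : {j : Fin m // j ≠ i} → Option (Fin l → X),
        (∏ j : {j : Fin m // j ≠ i}, cgF (e j.1) (g j)) *
          (Pm p (extAt i g none) * Real.logb 2 (Fintype.card (Fin l → X))) := by
        apply mul_le_mul_of_nonneg_left _ (by linarith : (0:ℝ) ≤ εw - εm)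
        exact Finset.sum_le_sum fun g _ =>
          mul_le_mul_of_nonneg_left (hkey g) (hR0 g)
    _ = (εw - εm) * Real.logb 2 (Fintype.card (Fin l → X)) := by
        congr 1
        have : ∀ g : {j : Fin m // j ≠ i} → Option (Fin l → X),
            (∏ j : {j : Fin m // j ≠ i}, cgF (e j.1) (g j)) *
              (Pm p (extAt i g none) * Real.logb 2 (Fintype.card (Fin l → X)))
            = ((∏ j : {j : Fin m // j ≠ i}, cgF (e j.1) (g j)) *
                Pm p (extAt i g none)) * Real.logb 2 (Fintype.card (Fin l → X)) := by
          intro g; ring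
        rw [Finset.sum_congr rfl fun g _ => this g, ← Finset.sum_mul,
          mass_extAt p hp1 i e, one_mul]

end STEP

section FINAL
variable {X : Type} [Fintype X] [DecidableEq X] {m l : ℕ} {εm εw : ℝ}

lemma tele [Nonempty X] (h0 : 0 ≤ εm) (hmw : εm ≤ εw) (hw1 : εw ≤ 1)
    (p : (Fin m → Fin l → X) → ℝ) (hp : ∀ x, 0 ≤ p x) (hp1 : ∑ x, p x = 1) :
    ∀ k : ℕ, k ≤ m →
      Psi p (fun j => if (j : ℕ) < k then εw else εm) - Psi p (fun _ => εm)
        ≤ (k : ℝ) * ((εw - εm) * Real.logb 2 (Fintype.card (Fin l → X))) := by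
  intro k
  induction k with
  | zero =>
    intro _
    have he : (fun j : Fin m => if (j : ℕ) < 0 then εw else εm) = fun _ => εm := by
      funext j; simp
    rw [he]
    simp
  | succ k ih =>
    intro hk1
    have hkm : k < m := hk1
    have hk : k ≤ m := le_of_lt hkm
    set i : Fin m := ⟨k, hkm⟩ with hi
    set ek : Fin m → ℝ := fun j => if (j : ℕ) < k then εw else εm with hek
    have h1 : ek = Function.update ek i εm := by
      funext j
      by_cases hj : j = i
      · subst hj; rw [Function.update_self]; simp [hek, hi]
      · rw [Function.update_of_ne hj]
    have h2 : (fun j : Fin m => if (j : ℕ) < k + 1 then εw else εm)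
        = Function.update ek i εw := by
      funext j
      by_cases hj : j = i
      · subst hj; rw [Function.update_self]; simp [hi]
      · rw [Function.update_of_ne hj, hek]
        have hne : (j : ℕ) ≠ k := fun h => hj (Fin.ext (by simp [hi, h]))
        by_cases hlt : (j : ℕ) < k
        · simp [hlt, Nat.lt_succ_of_lt hlt]
        · have h3 : ¬ (j : ℕ) < k + 1 := by omega
          simp [hlt, h3]
    have hstep := step_bound h0 hmw hw1 p hp hp1 i ek
      (fun j => by show (0:ℝ) ≤ if (j : ℕ) < k then εw else εm
                   split <;> linarith)
      (fun j => by show (if (j : ℕ) < k then εw else εm) ≤ 1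
                   split <;> linarith)
    rw [← h1] at hstep
    rw [h2]
    have hih := ih hk
    push_cast
    linarith

lemma main_ineq [Nonempty X] (h0 : 0 ≤ εm) (hmw : εm ≤ εw) (hw1 : εw ≤ 1)
    (p : (Fin m → Fin l → X) → ℝ) (hp : ∀ x, 0 ≤ p x) (hp1 : ∑ x, p x = 1) :
    Psi p (fun _ : Fin m => εw) - Psi p (fun _ => εm)
      ≤ (m : ℝ) * ((εw - εm) * Real.logb 2 (Fintype.card (Fin l → X))) := by
  have h := tele h0 hmw hw1 p hp hp1 m le_rfl
  have he : (fun j : Fin m => if (j : ℕ) < m then εw else εm) = fun _ => εw := by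
    funext j; simp [j.isLt]
  rwa [he] at h

theorem bew_main (X : Type) [Fintype X] [DecidableEq X] [Nonempty X] (m l : ℕ)
    (εm εw : ℝ) (h0 : 0 ≤ εm) (hmw : εm ≤ εw) (hw1 : εw ≤ 1) (hm1 : εm < 1)
    (p : (Fin m → Fin l → X) → ℝ) (hp : ∀ x, 0 ≤ p x) (hp1 : (∑ x, p x) = 1) :
    (∑ x : Fin m → Fin l → X, ∑ y : Fin m → Option (Fin l → X),
      ∑ z : Fin m → Option (Fin l → X),
        bewJoint X m l εm εw p x y z *
          Real.logb 2
            ((bewJoint X m l εm εw p x y z *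
                ∑ x' : Fin m → Fin l → X, ∑ y' : Fin m → Option (Fin l → X),
                  bewJoint X m l εm εw p x' y' z) /
              ((∑ y' : Fin m → Option (Fin l → X), bewJoint X m l εm εw p x y' z) *
                (∑ x' : Fin m → Fin l → X, bewJoint X m l εm εw p x' y z))))
      ≤ (m : ℝ) * l * (εw - εm) * Real.logb 2 (Fintype.card X) := by
  rw [cmi_eq h0 hmw hw1 hm1 p hp]
  have hcard : Real.logb 2 (Fintype.card (Fin l → X))
      = (l : ℝ) * Real.logb 2 (Fintype.card X) := by
    have hc : Fintype.card (Fin l → X) = Fintype.card X ^ l := by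
      rw [Fintype.card_fun, Fintype.card_fin]
    rw [hc]
    push_cast
    exact Real.logb_pow 2 _ l
  calc Psi p (fun _ : Fin m => εw) - Psi p (fun _ => εm)
      ≤ (m : ℝ) * ((εw - εm) * Real.logb 2 (Fintype.card (Fin l → X))) :=
        main_ineq h0 hmw hw1 p hp hp1
    _ = (m : ℝ) * l * (εw - εm) * Real.logb 2 (Fintype.card X) := by
        rw [hcard]; ring

end FINAL


/-- `I(X^{ml}; Y^{ml} | Z^{ml}) ≤ m·l·(εw - εm)·log₂|X|` for any input distribution. -/
theorem stmt_17 (X : Type) [Fintype X] [DecidableEq X] [Nonempty X] (m l : ℕ)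
    (εm εw : ℝ) (h0 : 0 ≤ εm) (hmw : εm ≤ εw) (hw1 : εw ≤ 1) (hm1 : εm < 1)
    (p : (Fin m → Fin l → X) → ℝ) (hp : ∀ x, 0 ≤ p x) (hp1 : (∑ x, p x) = 1) :
    bewCMI X m l εm εw p ≤ (m : ℝ) * l * (εw - εm) * Real.logb 2 (Fintype.card X) := by
  rw [bewCMI]
  exact bew_main X m l εm εw h0 hmw hw1 hm1 p hp hp1
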